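/- Let T be a bounded operator on a Hilbert space H with closed invariant subspace N, written in block form [[A, B], [0, D]] relative to H = N ⊕ N⊥. If [T*, T] is compact, then [A*, A] is compact if and only if [D*, D] is compact. -/

import Mathlib

/-!
With `Q = 1 - P` and `B = P T Q`, invariance of `N` (`Q T P = 0`) gives `T = A + B + D`, and
expanding the self-commutators of the diagonal blocks gives `[A*, A] = P [T*, T] P + B B*` and
`[D*, D] = Q [T*, T] Q - B* B`. The compressions of `[T*, T]` are compact, so `[A*, A]` is
compact iff `B B*` is, and `[D*, D]` is compact iff `B* B` is. Both are
equivalent to compactness of `B`, since `‖B x‖² ≤ ‖B* B x‖ ‖x‖`.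
-/

open Metric Set ContinuousLinearMap

theorem TotallyBounded.image_of_forall_dist_lt {α β γ : Type*} [PseudoMetricSpace β]
    [PseudoMetricSpace γ] {f : α → β} {g : α → γ} {s : Set α} (hg : TotallyBounded (g '' s))
    (hfg : ∀ ε > 0, ∃ δ > 0, ∀ x ∈ s, ∀ y ∈ s, dist (g x) (g y) < δ → dist (f x) (f y) < ε) :
    TotallyBounded (f '' s) := by
  rw [Metric.totallyBounded_iff]
  intro ε hε
  obtain ⟨δ, hδ, hfg⟩ := hfg ε hε
  obtain ⟨u, hus, hu, hcover⟩ :=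
    exists_subset_image_finite_and.mp (finite_approx_of_totallyBounded hg δ hδ)
  refine ⟨f '' u, hu.image f, ?_⟩
  rintro _ ⟨x, hx, rfl⟩
  obtain ⟨_, ⟨y, hy, rfl⟩, hxy⟩ := mem_iUnion₂.mp (hcover (mem_image_of_mem g hx))
  exact mem_iUnion₂.mpr ⟨f y, mem_image_of_mem f hy, hfg x hx y (hus hy) hxy⟩

section InnerProductSpace

variable {𝕜 E F : Type*} [RCLike 𝕜] [NormedAddCommGroup E] [InnerProductSpace 𝕜 E]
  [CompleteSpace E] [NormedAddCommGroup F] [InnerProductSpace 𝕜 F] [CompleteSpace F]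

theorem ContinuousLinearMap.apply_norm_sq_le_adjoint_comp_self (S : E →L[𝕜] F) (x : E) :
    ‖S x‖ ^ 2 ≤ ‖(adjoint S ∘L S) x‖ * ‖x‖ := by
  rw [apply_norm_sq_eq_inner_adjoint_left]
  exact (RCLike.re_le_norm _).trans (norm_inner_le_norm _ _)

theorem isCompactOperator_of_adjoint_comp_self {S : E →L[𝕜] F}
    (hS : IsCompactOperator (adjoint S ∘L S)) : IsCompactOperator S := by
  refine (isCompactOperator_iff_isCompact_closure_image_closedBall (S : E →ₗ[𝕜] F) one_pos).mpr
    (TotallyBounded.isCompact_of_isClosed (TotallyBounded.closure ?_) isClosed_closure)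
  refine TotallyBounded.image_of_forall_dist_lt
    ((hS.isCompact_closure_image_closedBall 1).totallyBounded.subset subset_closure) ?_
  intro ε hε
  refine ⟨ε ^ 2 / 2, by positivity, fun x hx y hy hxy => ?_⟩
  rw [mem_closedBall_zero_iff] at hx hy
  rw [coe_coe, dist_eq_norm, ← map_sub] at hxy
  rw [coe_coe, dist_eq_norm, ← map_sub]
  have hxy' : ‖x - y‖ ≤ 2 := (norm_sub_le x y).trans (by linarith)
  refine lt_of_pow_lt_pow_left₀ 2 hε.le ?_
  calc ‖S (x - y)‖ ^ 2 ≤ ‖(adjoint S ∘L S) (x - y)‖ * ‖x - y‖ :=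
        apply_norm_sq_le_adjoint_comp_self S (x - y)
    _ ≤ ‖(adjoint S ∘L S) (x - y)‖ * 2 := by gcongr
    _ < ε ^ 2 := by linarith

end InnerProductSpace

def compactOperatorIdeal (𝕜 E : Type*) [NontriviallyNormedField 𝕜] [NormedAddCommGroup E]
    [NormedSpace 𝕜 E] : TwoSidedIdeal (E →L[𝕜] E) :=
  .mk' {T | IsCompactOperator T} isCompactOperator_zero .add .neg
    (fun hy => hy.clm_comp _) (fun hx => hx.comp_clm _)

theorem mem_compactOperatorIdeal {𝕜 E : Type*} [NontriviallyNormedField 𝕜] [NormedAddCommGroup E]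
    [NormedSpace 𝕜 E] {T : E →L[𝕜] E} : T ∈ compactOperatorIdeal 𝕜 E ↔ IsCompactOperator T :=
  TwoSidedIdeal.mem_mk' ..

theorem mem_compactOperatorIdeal_of_star_mul_self_mem {𝕜 E : Type*} [RCLike 𝕜]
    [NormedAddCommGroup E] [InnerProductSpace 𝕜 E] [CompleteSpace E] {S : E →L[𝕜] E}
    (hS : star S * S ∈ compactOperatorIdeal 𝕜 E) : S ∈ compactOperatorIdeal 𝕜 E :=
  mem_compactOperatorIdeal.mpr
    (isCompactOperator_of_adjoint_comp_self (mem_compactOperatorIdeal.mp hS))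

section StarRing

variable {R : Type*} [Ring R] [StarRing R]

def selfCommutator (x : R) : R := star x * x - x * star x

theorem selfCommutator_star (x : R) : selfCommutator (star x) = -selfCommutator x := by
  simp only [selfCommutator, star_star, neg_sub]

theorem TwoSidedIdeal.mul_star_self_mem_iff {I : TwoSidedIdeal R}
    (hI : ∀ x, star x * x ∈ I → x ∈ I) (x : R) : x * star x ∈ I ↔ star x * x ∈ I :=
  ⟨fun h => I.mul_mem_right _ _ (hI (star x) (by rwa [star_star])),
    fun h => I.mul_mem_right _ _ (hI x h)⟩

variable {p t : R}

theorem selfCommutator_compression_eq (hp : IsStarProjection p) (ht : (1 - p) * t * p = 0) :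
    selfCommutator (p * t * p) =
      p * selfCommutator t * p + p * t * (1 - p) * star (p * t * (1 - p)) := by
  have hp' : star p = p := hp.isSelfAdjoint.star_eq
  have hpp (x : R) : p * (p * x) = p * x := by rw [← mul_assoc, hp.isIdempotentElem.eq]
  have htp (x : R) : p * (t * (p * x)) = t * (p * x) := by
    simpa only [sub_mul, one_mul, mul_assoc, zero_mul, sub_eq_zero, eq_comm] using
      congrArg (· * x) ht
  have hpt (x : R) : p * (star t * (p * x)) = p * (star t * x) := by
    simpa only [mul_one, star_mul, hp', mul_assoc] using congrArg (star · * x) (htp 1)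
  simp only [selfCommutator, star_mul, star_sub, hp', mul_sub, sub_mul, mul_one,
    mul_assoc, hpp, htp, hpt]
  abel

-- `selfCommutator_compression_eq` applied to `t*`, which leaves the range of `1 - p` invariant.
theorem selfCommutator_compression_one_sub_eq (hp : IsStarProjection p)
    (ht : (1 - p) * t * p = 0) :
    selfCommutator ((1 - p) * t * (1 - p)) =
      (1 - p) * selfCommutator t * (1 - p) - star (p * t * (1 - p)) * (p * t * (1 - p)) := by
  have hp' : star p = p := hp.isSelfAdjoint.star_eq
  have hq' : star (1 - p) = 1 - p := hp.one_sub.isSelfAdjoint.star_eq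
  have hd : (1 - p) * star t * (1 - p) = star ((1 - p) * t * (1 - p)) := by
    simp only [star_mul, hq', mul_assoc]
  have hb : (1 - p) * star t * p = star (p * t * (1 - p)) := by
    simp only [star_mul, hp', hq', mul_assoc]
  have ht' : (1 - (1 - p)) * star t * (1 - p) = 0 := by
    simpa only [sub_sub_cancel, star_mul, hp', hq', star_zero, mul_assoc] using congrArg star ht
  have h := selfCommutator_compression_eq hp.one_sub ht'
  rw [sub_sub_cancel, hd, hb, star_star, selfCommutator_star, selfCommutator_star,
    neg_eq_iff_eq_neg] at h
  rw [h]
  noncomm_ring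

theorem selfCommutator_compression_mem_iff {I : TwoSidedIdeal R}
    (hI : ∀ x, star x * x ∈ I → x ∈ I) (hp : IsStarProjection p) (ht : (1 - p) * t * p = 0)
    (htI : selfCommutator t ∈ I) :
    selfCommutator (p * t * p) ∈ I ↔ selfCommutator ((1 - p) * t * (1 - p)) ∈ I := by
  have hp_mem : p * selfCommutator t * p ∈ I := I.mul_mem_right _ _ (I.mul_mem_left _ _ htI)
  have hq_mem : (1 - p) * selfCommutator t * (1 - p) ∈ I :=
    I.mul_mem_right _ _ (I.mul_mem_left _ _ htI)
  rw [selfCommutator_compression_eq hp ht, selfCommutator_compression_one_sub_eq hp ht,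
    add_mem_cancel_left hp_mem, ← neg_mem_iff (x := _ - _), neg_sub, sub_eq_add_neg (star _ * _),
    add_mem_cancel_right (neg_mem hq_mem), TwoSidedIdeal.mul_star_self_mem_iff hI]

end StarRing

theorem compact_selfCommutator_restriction_iff_quotient_general
    {H : Type*} [NormedAddCommGroup H] [InnerProductSpace ℂ H] [CompleteSpace H]
    (N : Submodule ℂ H) [CompleteSpace N]
    (P : H →L[ℂ] H) (hP : P = N.subtypeL ∘L N.orthogonalProjection)
    (T A D : H →L[ℂ] H)
    (hA : A = P ∘L T ∘L P)
    (hD : D = (1 - P) ∘L T ∘L (1 - P))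
    (hinv : (1 - P) ∘L T ∘L P = 0)
    (hT : IsCompactOperator ⇑(adjoint T ∘L T - T ∘L adjoint T)) :
    IsCompactOperator ⇑(adjoint A ∘L A - A ∘L adjoint A) ↔
      IsCompactOperator ⇑(adjoint D ∘L D - D ∘L adjoint D) := by
  have hPP : IsStarProjection P := hP ▸ isStarProjection_starProjection
  subst hA hD
  simp only [← mul_def, ← star_eq_adjoint] at hinv hT ⊢
  rw [← mul_assoc] at hinv
  rw [← mul_assoc P, ← mul_assoc (1 - P)]
  have hTI : selfCommutator T ∈ compactOperatorIdeal ℂ H := mem_compactOperatorIdeal.mpr hT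
  simpa only [selfCommutator, mem_compactOperatorIdeal] using
    selfCommutator_compression_mem_iff (I := compactOperatorIdeal ℂ H)
      (fun _ => mem_compactOperatorIdeal_of_star_mul_self_mem) hPP hinv hTI

/-- if `[T*,T]` is compact then `[A*,A]` is compact iff `[D*,D]`
is compact, where `T = [[A,B],[0,D]]` relative to `H = N ⊕ Nᗮ` (blocks realized
as compressions via the projection `P` onto the invariant subspace `N`). -/
theorem compact_selfCommutator_restriction_iff_quotient
    {H : Type*} [NormedAddCommGroup H] [InnerProductSpace ℂ H] [CompleteSpace H]
    (N : Submodule ℂ H) [CompleteSpace N]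
    (P : H →L[ℂ] H) (hP : P = N.subtypeL ∘L N.orthogonalProjection)
    (T A B D : H →L[ℂ] H)
    (hA : A = P ∘L T ∘L P)
    (hB : B = P ∘L T ∘L (1 - P))
    (hD : D = (1 - P) ∘L T ∘L (1 - P))
    (hinv : (1 - P) ∘L T ∘L P = 0)
    (hT : IsCompactOperator ⇑(adjoint T ∘L T - T ∘L adjoint T)) :
    IsCompactOperator ⇑(adjoint A ∘L A - A ∘L adjoint A) ↔
      IsCompactOperator ⇑(adjoint D ∘L D - D ∘L adjoint D) :=
  compact_selfCommutator_restriction_iff_quotient_general N P hP T A D hA hD hinv hT
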